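/- Let G be a finite group, S, T ⊆ G with BCay(G,S) ≅ BCay(G,T), and suppose there exists an isomorphism φ from BCay(G,S) to BCay(G,T) fixing the vertex (1_G, 0) and mapping G × {0} onto itself, and suppose moreover φ conjugates Ĝ to itself (φ normalizes Ĝ). Then T = g·S^α for some g ∈ G and α ∈ Aut(G). -/

import Mathlib

/-!
Write `φ (x, 0) = (f x, 0)` and `φ (x, 1) = (h x, 1)` (the second layer is preserved because `G` is
finite). Normalizing `Ĝ` means that for each `a` there is a `b` with `f (x * a) = f x * b` and
`h (x * a) = h x * b`. Since `f 1 = 1`, this forces `b = f a`, so `f` is an automorphism `α` of `G`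
and `h x = h 1 * α x`. Reading off the neighbourhood of `(1, 0)` then yields `T = h 1 · α(S)`.
-/

def biCayley (G : Type*) [Group G] (S : Set G) : SimpleGraph (G × Bool) where
  Adj v w := (v.2 = false ∧ w.2 = true ∧ w.1 * v.1⁻¹ ∈ S) ∨
             (v.2 = true ∧ w.2 = false ∧ v.1 * w.1⁻¹ ∈ S)
  symm := ⟨fun v w h => by tauto⟩
  loopless := ⟨fun v h => by rcases h with ⟨h1,h2,_⟩|⟨h1,h2,_⟩ <;> simp [h1] at h2⟩

def biTrans (G : Type*) [Group G] : G →* Equiv.Perm (G × Bool) where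
  toFun g := ⟨fun v => (v.1 * g⁻¹, v.2), fun v => (v.1 * g, v.2),
    fun v => by simp, fun v => by simp⟩
  map_one' := by ext v <;> simp
  map_mul' a b := by ext v <;> simp [mul_assoc]

def graphAut {V : Type*} (Γ : SimpleGraph V) : Subgroup (Equiv.Perm V) where
  carrier := {f | ∀ a b, Γ.Adj a b ↔ Γ.Adj (f a) (f b)}
  one_mem' := by intro a b; simp
  mul_mem' := by
    intro f g hf hg a b
    exact (hg a b).trans (hf (g a) (g b))
  inv_mem' := by
    intro f hf a b
    simpa using (hf (f⁻¹ a) (f⁻¹ b)).symm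

def cayAdj {G : Type*} [Group G] (S : Set G) (x y : G) : Prop := y * x⁻¹ ∈ S

def cayAut (G : Type*) [Group G] (S : Set G) : Subgroup (Equiv.Perm G) where
  carrier := {f | ∀ x y, cayAdj S x y ↔ cayAdj S (f x) (f y)}
  one_mem' := by intro a b; simp
  mul_mem' := by
    intro f g hf hg a b
    exact (hg a b).trans (hf (g a) (g b))
  inv_mem' := by
    intro f hf a b
    simpa using (hf (f⁻¹ a) (f⁻¹ b)).symm

def cayIso {G : Type*} [Group G] (S T : Set G) : Prop :=
  ∃ e : Equiv.Perm G, ∀ x y, cayAdj S x y ↔ cayAdj T (e x) (e y)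

def isCI (G : Type*) [Group G] (S : Set G) : Prop :=
  ∀ T : Set G, cayIso S T → ∃ α : G ≃* G, T = α '' S

open Function

section Layers

variable {α : Type*} (φ : Equiv.Perm (α × Bool))

lemma injective_fst_apply_of_snd_apply_eq {i : Bool} (hi : ∀ x, (φ (x, i)).2 = i) :
    Injective fun x => (φ (x, i)).1 := by
  intro x y hxy
  have : φ (x, i) = φ (y, i) := Prod.ext hxy ((hi x).trans (hi y).symm)
  exact congrArg Prod.fst (φ.injective this)

lemma snd_apply_not_of_snd_apply_eq [Finite α] {i : Bool} (hi : ∀ x, (φ (x, i)).2 = i) (x : α) :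
    (φ (x, !i)).2 = !i := by
  by_contra hne
  obtain ⟨y, hy⟩ :=
    Finite.surjective_of_injective (injective_fst_apply_of_snd_apply_eq φ hi) (φ (x, !i)).1
  have : φ (y, i) = φ (x, !i) := Prod.ext hy (by cases i <;> simp_all)
  simpa using φ.injective this

end Layers

section RightTranslation

variable {G : Type*} [Group G]

@[simp]
lemma biTrans_apply (a : G) (v : G × Bool) : biTrans G a v = (v.1 * a⁻¹, v.2) := rfl

lemma biCayley_adj_false_true (S : Set G) (x y : G) :
    (biCayley G S).Adj (x, false) (y, true) ↔ y * x⁻¹ ∈ S := by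
  simp [biCayley]

lemma exists_fst_apply_mul_right_of_conj_biTrans {φ : Equiv.Perm (G × Bool)}
    (hnorm : ∀ a, ∃ b, φ * biTrans G a * φ⁻¹ = biTrans G b) (a : G) :
    ∃ b, ∀ x i, (φ (x * a, i)).1 = (φ (x, i)).1 * b := by
  obtain ⟨b, hb⟩ := hnorm a⁻¹
  refine ⟨b⁻¹, fun x i => ?_⟩
  have := congrArg Prod.fst (Equiv.congr_fun (mul_inv_eq_iff_eq_mul.mp hb) (x, i))
  simpa only [Equiv.Perm.mul_apply, biTrans_apply, inv_inv] using this

variable {f h : G → G}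

lemma map_mul_of_map_mul_right (hf1 : f 1 = 1) (hf : ∀ a, ∃ b, ∀ x, f (x * a) = f x * b)
    (x y : G) : f (x * y) = f x * f y := by
  obtain ⟨b, hb⟩ := hf y
  have hby : f y = b := by simpa [hf1] using hb 1
  rw [hb, hby]

lemma apply_eq_mul_of_map_mul_right (hf1 : f 1 = 1)
    (hfh : ∀ a, ∃ b, ∀ x, f (x * a) = f x * b ∧ h (x * a) = h x * b) (x : G) :
    h x = h 1 * f x := by
  obtain ⟨b, hb⟩ := hfh x
  obtain ⟨hfx, hhx⟩ := hb 1
  rw [one_mul, hf1, one_mul] at hfx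
  rwa [one_mul, ← hfx] at hhx

end RightTranslation

lemma Set.eq_image_of_mem_iff {α β : Type*} {f : α → β} {S : Set α} {T : Set β}
    (hf : Surjective f) (hST : ∀ s, s ∈ S ↔ f s ∈ T) : T = f '' S := by
  rw [show S = f ⁻¹' T from Set.ext hST, Set.image_preimage_eq T hf]

theorem stmt_19 {G : Type*} [Group G] [Fintype G] (S T : Set G)
    (φ : Equiv.Perm (G × Bool))
    (hiso : ∀ v w : G × Bool, (biCayley G S).Adj v w ↔ (biCayley G T).Adj (φ v) (φ w))
    (hfix : φ ((1 : G), false) = ((1 : G), false))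
    (hclass : ∀ x : G, (φ (x, false)).2 = false)
    (hnorm : ∀ a : G, ∃ b : G, φ * biTrans G a * φ⁻¹ = biTrans G b) :
    ∃ (g : G) (α : G ≃* G), T = (fun s => g * α s) '' S := by
  set f : G → G := fun x => (φ (x, false)).1
  set h : G → G := fun x => (φ (x, true)).1
  have hf1 : f 1 = 1 := congrArg Prod.fst hfix
  have htrans := exists_fst_apply_mul_right_of_conj_biTrans hnorm
  have hfh : ∀ a, ∃ b, ∀ x, f (x * a) = f x * b ∧ h (x * a) = h x * b := fun a =>
    (htrans a).imp fun _ hb x => ⟨hb x false, hb x true⟩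
  have hinj : Injective f := injective_fst_apply_of_snd_apply_eq φ hclass
  let α : G ≃* G := MulEquiv.ofBijective
    (⟨f, map_mul_of_map_mul_right hf1 fun a => (hfh a).imp fun _ hb x => (hb x).1⟩ : G →ₙ* G)
    ⟨hinj, Finite.surjective_of_injective hinj⟩
  have hα : ∀ s, α s = f s := fun _ => rfl
  refine ⟨h 1, α, Set.eq_image_of_mem_iff ((mul_left_surjective _).comp α.surjective) fun s => ?_⟩
  have hφs : φ (s, true) = (h 1 * f s, true) := by
    rw [← apply_eq_mul_of_map_mul_right hf1 hfh s]
    exact Prod.ext rfl (snd_apply_not_of_snd_apply_eq φ hclass s)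
  simpa [hfix, hφs, hα, biCayley_adj_false_true] using hiso (1, false) (s, true)
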